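/- For x ∈ (0,1) ⊆ ℝ define K(x) := ∫₀^{π/2} (1 − x²·sin²θ)^{−1/2} dθ (Legendre's complete elliptic integral of the first kind). Then K is twice differentiable on (0,1) and satisfies the first Chudnovsky equation there: x(x−1)(x+1)·K''(x) + (3x²−1)·K'(x) + x·K(x) = 0 for all x ∈ (0,1). -/

import Mathlib

/-!
Differentiation under the integral sign is legitimate because the `x`-derivatives of the
integrand are jointly continuous, hence bounded on a compact neighbourhood. With
`Δ² = 1 - x² sin² θ`, the Chudnovsky combination of the integrands of `K''`, `K'` and `K` is
exactly `d/dθ (x sin θ cos θ Δ⁻³)`, which vanishes at `θ = 0` and `θ = π/2`.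
-/

open Real

/-- Legendre's complete elliptic integral of the first kind. -/
noncomputable def ellipticK (x : ℝ) : ℝ :=
  ∫ θ in (0:ℝ)..(π / 2), (1 - x ^ 2 * Real.sin θ ^ 2) ^ (-(1 / 2 : ℝ))

open MeasureTheory Metric Set Function

theorem hasDerivAt_intervalIntegral_of_continuousOn {F F' : ℝ → ℝ → ℝ} {U : Set ℝ}
    {a b x₀ : ℝ} (hU : IsOpen U) (hx₀ : x₀ ∈ U)
    (hF : ∀ y ∈ U, ContinuousOn (F y) (uIcc a b))
    (hF' : ContinuousOn (uncurry F') (U ×ˢ uIcc a b))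
    (hderiv : ∀ y ∈ U, ∀ t ∈ uIcc a b, HasDerivAt (F · t) (F' y t) y) :
    HasDerivAt (fun y => ∫ t in a..b, F y t) (∫ t in a..b, F' x₀ t) x₀ := by
  obtain ⟨ε, hε, hball⟩ := Metric.isOpen_iff.1 hU x₀ hx₀
  have hsub : closedBall x₀ (ε / 2) ⊆ U :=
    (closedBall_subset_ball (half_lt_self hε)).trans hball
  obtain ⟨C, hC⟩ := ((isCompact_closedBall x₀ (ε / 2)).prod
    isCompact_uIcc).exists_bound_of_continuousOn (hF'.mono (prod_mono hsub subset_rfl))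
  refine (intervalIntegral.hasDerivAt_integral_of_dominated_loc_of_deriv_le (bound := fun _ => C)
    (closedBall_mem_nhds x₀ (half_pos hε)) ?_ ((hF x₀ hx₀).intervalIntegrable)
    (((hF'.uncurry_left x₀ hx₀).mono uIoc_subset_uIcc).aestronglyMeasurable measurableSet_uIoc)
    (ae_of_all _ fun t ht y hy => hC (y, t) ⟨hy, uIoc_subset_uIcc ht⟩) intervalIntegrable_const
    (ae_of_all _ fun t ht y hy => hderiv y (hsub hy) t (uIoc_subset_uIcc ht))).2
  filter_upwards [hU.mem_nhds hx₀] with y hy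
  exact ((hF y hy).mono uIoc_subset_uIcc).aestronglyMeasurable measurableSet_uIoc

noncomputable section

def deltaSq (x θ : ℝ) : ℝ := 1 - x ^ 2 * sin θ ^ 2

def integrandK (x θ : ℝ) : ℝ := deltaSq x θ ^ (-(1 / 2 : ℝ))

def integrandK' (x θ : ℝ) : ℝ := x * sin θ ^ 2 * deltaSq x θ ^ (-(3 / 2 : ℝ))

def integrandK'' (x θ : ℝ) : ℝ :=
  sin θ ^ 2 * deltaSq x θ ^ (-(3 / 2 : ℝ))
    + 3 * x ^ 2 * sin θ ^ 4 * deltaSq x θ ^ (-(5 / 2 : ℝ))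

end

theorem deltaSq_pos {x : ℝ} (hx : x ∈ Ioo (-1) 1) (θ : ℝ) : 0 < deltaSq x θ := by
  have hx2 : x ^ 2 < 1 := by nlinarith [hx.1, hx.2]
  have := sin_sq_le_one θ
  unfold deltaSq
  nlinarith [sq_nonneg x]

theorem continuousOn_deltaSq_rpow (p : ℝ) :
    ContinuousOn (uncurry fun x θ => deltaSq x θ ^ p) (Ioo (-1) 1 ×ˢ univ) := by
  refine ContinuousOn.rpow_const (by unfold deltaSq; fun_prop) fun z hz => ?_
  exact Or.inl (deltaSq_pos hz.1 z.2).ne'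

theorem hasDerivAt_deltaSq_rpow {x : ℝ} (hx : x ∈ Ioo (-1) 1) (θ p : ℝ) :
    HasDerivAt (fun y => deltaSq y θ ^ p)
      (-2 * p * x * sin θ ^ 2 * deltaSq x θ ^ (p - 1)) x := by
  have h : HasDerivAt (fun y => deltaSq y θ) (-(2 * x * sin θ ^ 2)) x := by
    unfold deltaSq
    simpa using ((hasDerivAt_pow 2 x).mul_const (sin θ ^ 2)).const_sub 1
  convert h.rpow_const (p := p) (Or.inl (deltaSq_pos hx θ).ne') using 1
  ring

theorem hasDerivAt_integrandK {x : ℝ} (hx : x ∈ Ioo (-1) 1) (θ : ℝ) :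
    HasDerivAt (integrandK · θ) (integrandK' x θ) x := by
  refine (hasDerivAt_deltaSq_rpow hx θ (-(1 / 2))).congr_deriv ?_
  unfold integrandK'
  norm_num

theorem hasDerivAt_integrandK' {x : ℝ} (hx : x ∈ Ioo (-1) 1) (θ : ℝ) :
    HasDerivAt (integrandK' · θ) (integrandK'' x θ) x := by
  refine (((hasDerivAt_id x).mul_const (sin θ ^ 2)).mul
    (hasDerivAt_deltaSq_rpow hx θ (-(3 / 2)))).congr_deriv ?_
  unfold integrandK''
  norm_num
  ring

theorem continuousOn_integrandK :
    ContinuousOn (uncurry integrandK) (Ioo (-1) 1 ×ˢ univ) :=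
  continuousOn_deltaSq_rpow _

theorem continuousOn_integrandK' :
    ContinuousOn (uncurry integrandK') (Ioo (-1) 1 ×ˢ univ) :=
  (by fun_prop : Continuous fun z : ℝ × ℝ => z.1 * sin z.2 ^ 2).continuousOn.mul
    (continuousOn_deltaSq_rpow _)

theorem continuousOn_integrandK'' :
    ContinuousOn (uncurry integrandK'') (Ioo (-1) 1 ×ˢ univ) :=
  ((by fun_prop : Continuous fun z : ℝ × ℝ => sin z.2 ^ 2).continuousOn.mul
    (continuousOn_deltaSq_rpow _)).add
  ((by fun_prop : Continuous fun z : ℝ × ℝ => 3 * z.1 ^ 2 * sin z.2 ^ 4).continuousOn.mul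
    (continuousOn_deltaSq_rpow _))

theorem hasDerivAt_ellipticK {x : ℝ} (hx : x ∈ Ioo (-1) 1) :
    HasDerivAt ellipticK (∫ θ in (0:ℝ)..(π / 2), integrandK' x θ) x := by
  rw [show ellipticK = fun y => ∫ θ in (0:ℝ)..(π / 2), integrandK y θ from rfl]
  exact hasDerivAt_intervalIntegral_of_continuousOn isOpen_Ioo hx
    (fun y hy => (continuousOn_integrandK.uncurry_left y hy).mono (subset_univ _))
    (continuousOn_integrandK'.mono (prod_mono subset_rfl (subset_univ _)))
    (fun y hy θ _ => hasDerivAt_integrandK hy θ)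

theorem hasDerivAt_deriv_ellipticK {x : ℝ} (hx : x ∈ Ioo (-1) 1) :
    HasDerivAt (deriv ellipticK) (∫ θ in (0:ℝ)..(π / 2), integrandK'' x θ) x := by
  have hderiv :
      deriv ellipticK =ᶠ[nhds x] fun y => ∫ θ in (0:ℝ)..(π / 2), integrandK' y θ :=
    Filter.eventuallyEq_of_mem (isOpen_Ioo.mem_nhds hx) fun y hy => (hasDerivAt_ellipticK hy).deriv
  refine HasDerivAt.congr_of_eventuallyEq ?_ hderiv
  exact hasDerivAt_intervalIntegral_of_continuousOn isOpen_Ioo hx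
    (fun y hy => (continuousOn_integrandK'.uncurry_left y hy).mono (subset_univ _))
    (continuousOn_integrandK''.mono (prod_mono subset_rfl (subset_univ _)))
    (fun y hy θ _ => hasDerivAt_integrandK' hy θ)

theorem hasDerivAt_chudnovsky_potential {x : ℝ} (hx : x ∈ Ioo (-1) 1) (θ : ℝ) :
    HasDerivAt (fun φ => x * sin φ * cos φ * deltaSq x φ ^ (-(3 / 2 : ℝ)))
      (x * (x - 1) * (x + 1) * integrandK'' x θ + (3 * x ^ 2 - 1) * integrandK' x θ
        + x * integrandK x θ) θ := by
  have hpos := deltaSq_pos hx θ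
  have hdelta : HasDerivAt (deltaSq x) (-(2 * x ^ 2 * sin θ * cos θ)) θ := by
    unfold deltaSq
    exact ((((hasDerivAt_sin θ).fun_pow 2).const_mul (x ^ 2)).const_sub 1).congr_deriv (by ring)
  have h := (((hasDerivAt_sin θ).const_mul x).fun_mul (hasDerivAt_cos θ)).fun_mul
    (hdelta.rpow_const (p := -(3 / 2)) (Or.inl hpos.ne'))
  refine h.congr_deriv ?_
  unfold integrandK'' integrandK' integrandK
  -- Through `D`, the identity becomes polynomial in `sin θ`, `cos θ` and `D`.
  set D := deltaSq x θ ^ (-(5 / 2 : ℝ))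
  have h3 : deltaSq x θ ^ (-(3 / 2 : ℝ)) = deltaSq x θ * D := by
    rw [← rpow_one_add' hpos.le (by norm_num)]; norm_num
  have h1 : deltaSq x θ ^ (-(1 / 2 : ℝ)) = deltaSq x θ ^ 2 * D := by
    rw [← rpow_natCast, ← rpow_add' hpos.le (by norm_num)]; norm_num
  have h5 : deltaSq x θ ^ (-(3 / 2 : ℝ) - 1) = D := by norm_num [D]
  rw [h1, h3, h5]
  clear_value D
  unfold deltaSq
  linear_combination (x * (1 - x ^ 2 * sin θ ^ 2) * D + 3 * x ^ 3 * sin θ ^ 2 * D) * cos_sq' θ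

theorem integral_chudnovsky_combination {x : ℝ} (hx : x ∈ Ioo (-1) 1) :
    x * (x - 1) * (x + 1) * (∫ θ in (0:ℝ)..(π / 2), integrandK'' x θ)
      + (3 * x ^ 2 - 1) * (∫ θ in (0:ℝ)..(π / 2), integrandK' x θ)
      + x * (∫ θ in (0:ℝ)..(π / 2), integrandK x θ) = 0 := by
  have hint {f : ℝ → ℝ → ℝ} (hf : ContinuousOn (uncurry f) (Ioo (-1) 1 ×ˢ univ))
      (c : ℝ) :
      IntervalIntegrable (fun θ => c * f x θ) volume 0 (π / 2) :=
    (((hf.uncurry_left x hx).mono (subset_univ _)).const_smul c).intervalIntegrable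
  have h₂₁ := (hint continuousOn_integrandK'' (x * (x - 1) * (x + 1))).add
    (hint continuousOn_integrandK' (3 * x ^ 2 - 1))
  simp only [← intervalIntegral.integral_const_mul]
  rw [← intervalIntegral.integral_add (hint continuousOn_integrandK'' _)
      (hint continuousOn_integrandK' _),
    ← intervalIntegral.integral_add h₂₁ (hint continuousOn_integrandK _),
    intervalIntegral.integral_eq_sub_of_hasDerivAt
      (fun θ _ => hasDerivAt_chudnovsky_potential hx θ)
      (h₂₁.add (hint continuousOn_integrandK _))]
  simp

theorem ellipticK_solves_first_chudnovsky :
    (∀ x ∈ Set.Ioo (0:ℝ) 1, DifferentiableAt ℝ ellipticK x) ∧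
    (∀ x ∈ Set.Ioo (0:ℝ) 1, DifferentiableAt ℝ (deriv ellipticK) x) ∧
    ∀ x ∈ Set.Ioo (0:ℝ) 1,
      x * (x - 1) * (x + 1) * deriv (deriv ellipticK) x
        + (3 * x ^ 2 - 1) * deriv ellipticK x + x * ellipticK x = 0 := by
  have hsub : Ioo (0:ℝ) 1 ⊆ Ioo (-1) 1 := Ioo_subset_Ioo_left (by norm_num)
  refine ⟨fun x hx => (hasDerivAt_ellipticK (hsub hx)).differentiableAt,
    fun x hx => (hasDerivAt_deriv_ellipticK (hsub hx)).differentiableAt, fun x hx => ?_⟩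
  rw [(hasDerivAt_deriv_ellipticK (hsub hx)).deriv, (hasDerivAt_ellipticK (hsub hx)).deriv]
  exact integral_chudnovsky_combination (hsub hx)
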